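/- Let H be any looped graph and let G be obtained from H by adjoining two new vertices v and w in an Ω.2 move: v carries a loop, w does not, every vertex of H that is adjacent to one of v, w is also adjacent to the other, and v and w may or may not be adjacent. Then for every nonzero real number A, ⟨G⟩(A) = ⟨H⟩(A); consequently the graph Jones polynomials of G and H agree. -/

import Mathlib

/-!
Write `G` as `H` with the twin pair `v, w` adjoined. The state sum splits into a sum over the
diagonal matrices `Δ` on the vertices of `H` and, for each `Δ`, a four-term sum over the loops
toggled at `v` and `w`. Let `t = ν(H + Δ)` and let `m` be the nullity of `H + Δ` with a single
vertex adjoined that has the neighbourhood of `v` and loop value equal to the adjacency of `v`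
and `w`. Congruences and Schur complements show that the four nullities are `m` when the two
toggles agree, and `m + 1` and `t` when they differ. As `d = -A² - A⁻²` gives
`A² dᵐ + dᵐ⁺¹ + A⁻² dᵐ = 0`, the four terms add up to `dᵗ`, the term of `H`. The Jones
normalisation absorbs the two extra vertices and the extra loop.
-/

open Matrix BigOperators

/-- The graph bracket polynomial of a looped graph specified by its Boolean
adjacency matrix `M` over `GF(2)`:
`[G](A,B,d) = ∑_Δ A^{ν(Δ)} B^{ρ(Δ)} d^{ν(M+Δ)}`, the sum over all diagonal
matrices `Δ` over `GF(2)` (encoded by their diagonal functions `f`). -/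
noncomputable def gBracket {V : Type*} [Fintype V] [DecidableEq V] {K : Type*} [CommRing K]
    (M : Matrix V V (ZMod 2)) (A B d : K) : K :=
  ∑ f : V → ZMod 2,
    A ^ (Fintype.card V - (Matrix.diagonal f).rank)
      * B ^ (Matrix.diagonal f).rank
      * d ^ (Fintype.card V - (M + Matrix.diagonal f).rank)

/-- The reduced graph bracket `⟨G⟩(A) = [G](A, A⁻¹, -A² - A⁻²)`. -/
noncomputable def gBracketR {V : Type*} [Fintype V] [DecidableEq V]
    (M : Matrix V V (ZMod 2)) (A : ℝ) : ℝ :=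
  gBracket M A A⁻¹ (-A ^ 2 - A⁻¹ ^ 2)

/-- The graph Jones polynomial `V_G(t) = (-1)^n · t^{(3n-6ℓ)/4} · ⟨G⟩(t^{-1/4})`,
where `n` is the number of vertices and `ℓ` the number of loops of `G`. -/
noncomputable def jonesV {V : Type*} [Fintype V] [DecidableEq V]
    (M : Matrix V V (ZMod 2)) (t : ℝ) : ℝ :=
  (-1 : ℝ) ^ (Fintype.card V)
    * t ^ ((3 * (Fintype.card V : ℝ) - 6 * (Fintype.card {i : V // M i i = 1} : ℝ)) / 4)
    * gBracketR M (t ^ (-(1/4) : ℝ))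

theorem Submodule.finrank_prod {K V V' : Type*} [Field K] [AddCommGroup V] [Module K V]
    [AddCommGroup V'] [Module K V'] [FiniteDimensional K V] [FiniteDimensional K V']
    (p : Submodule K V) (q : Submodule K V') :
    Module.finrank K (p.prod q) = Module.finrank K p + Module.finrank K q := by
  have hinj : Function.Injective (p.subtype.prodMap q.subtype) :=
    Prod.map_injective.mpr ⟨p.injective_subtype, q.injective_subtype⟩
  rw [← Module.finrank_prod, ← LinearMap.finrank_range_of_inj hinj, LinearMap.range_prodMap,
    Submodule.range_subtype, Submodule.range_subtype]

theorem ZMod.sum_univ_two {M : Type*} [AddCommMonoid M] (f : ZMod 2 → M) :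
    ∑ x, f x = f 0 + f 1 :=
  Fin.sum_univ_two f

namespace Matrix

section BlockRank

variable {K : Type*} [Field K] {m n : Type*} [Fintype m] [Fintype n] [DecidableEq m]
  [DecidableEq n]

theorem rank_fromBlocks_zero₁₂_zero₂₁ (A : Matrix m m K) (D : Matrix n n K) :
    (fromBlocks A 0 0 D).rank = A.rank + D.rank := by
  let b₁ := Pi.basisFun K m
  let b₂ := Pi.basisFun K n
  have h : fromBlocks A 0 0 D = LinearMap.toMatrix (b₁.prod b₂) (b₁.prod b₂)
      ((toLin b₁ b₁ A).prodMap (toLin b₂ b₂ D)) := by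
    rw [LinearMap.toMatrix_prodMap, LinearMap.toMatrix_toLin, LinearMap.toMatrix_toLin]
  rw [h, rank_eq_finrank_range_toLin _ (b₁.prod b₂) (b₁.prod b₂), Matrix.toLin_toMatrix,
    LinearMap.range_prodMap, Submodule.finrank_prod, ← rank_eq_finrank_range_toLin,
    ← rank_eq_finrank_range_toLin]

theorem rank_fromBlocks_of_invertible₂₂ (A : Matrix m m K) (B : Matrix m n K)
    (C : Matrix n m K) (D : Matrix n n K) [Invertible D] :
    (fromBlocks A B C D).rank = (A - B * ⅟D * C).rank + Fintype.card n := by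
  rw [fromBlocks_eq_of_invertible₂₂, rank_mul_eq_left_of_isUnit_det,
    rank_mul_eq_right_of_isUnit_det, rank_fromBlocks_zero₁₂_zero₂₁,
    rank_of_isUnit D (isUnit_of_invertible D)]
  · simp
  · simp

end BlockRank

section Nullity

/-- The `ν` of the graph bracket. -/
noncomputable def nullity {R m n : Type*} [CommRing R] [Fintype n] (M : Matrix m n R) : ℕ :=
  Fintype.card n - M.rank

variable {K : Type*} [Field K] {m n κ : Type*} [Fintype n]

theorem nullity_add_rank (M : Matrix m n K) : M.nullity + M.rank = Fintype.card n := by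
  have := M.rank_le_card_width
  unfold nullity
  omega

theorem nullity_fromBlocks_zero₁₂_zero₂₁ [Fintype m] [DecidableEq m] [DecidableEq n]
    (A : Matrix m m K) (D : Matrix n n K) :
    (fromBlocks A 0 0 D).nullity = A.nullity + D.nullity := by
  have := A.nullity_add_rank
  have := D.nullity_add_rank
  have := (fromBlocks A 0 0 D).nullity_add_rank
  rw [rank_fromBlocks_zero₁₂_zero₂₁, Fintype.card_sum] at *
  omega

theorem nullity_fromBlocks_of_invertible₂₂ [Fintype m] [DecidableEq m] [DecidableEq n]
    (A : Matrix m m K) (B : Matrix m n K) (C : Matrix n m K) (D : Matrix n n K) [Invertible D] :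
    (fromBlocks A B C D).nullity = (A - B * ⅟D * C).nullity := by
  have := (A - B * ⅟D * C).nullity_add_rank
  have := (fromBlocks A B C D).nullity_add_rank
  rw [rank_fromBlocks_of_invertible₂₂, Fintype.card_sum] at *
  omega

theorem nullity_submatrix [Fintype κ] (A : Matrix n n K) (e : κ ≃ n) :
    (A.submatrix e e).nullity = A.nullity := by
  rw [nullity, nullity, rank_submatrix, Fintype.card_congr e]

theorem nullity_mul_mul_of_isUnit_det [DecidableEq n] (P M Q : Matrix n n K) (hP : IsUnit P.det)
    (hQ : IsUnit Q.det) : (P * M * Q).nullity = M.nullity := by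
  rw [nullity, nullity, rank_mul_eq_left_of_isUnit_det _ _ hQ,
    rank_mul_eq_right_of_isUnit_det _ _ hP]

theorem nullity_unique [DecidableEq K] [Unique κ] (δ : K) :
    (of fun _ _ => δ : Matrix κ κ K).nullity = if δ = 0 then 1 else 0 := by
  have : (of fun _ _ => δ : Matrix κ κ K) = diagonal fun _ => δ := by
    ext i j
    simp [Subsingleton.elim i j]
  rw [nullity, this, rank_diagonal]
  split_ifs with h <;> simp [h]

theorem pow_nullity_mul_pow_rank_diagonal [DecidableEq K] [DecidableEq n] {S : Type*}
    [CommMonoid S] (w : n → K) (A B : S) :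
    A ^ (diagonal w).nullity * B ^ (diagonal w).rank = ∏ i, if w i = 0 then A else B := by
  rw [Finset.prod_ite, Finset.prod_const, Finset.prod_const, nullity, rank_diagonal,
    Fintype.card_subtype_compl, Fintype.card_subtype]
  have := Finset.card_filter_add_card_filter_not (s := Finset.univ) (w · = 0)
  rw [Finset.card_univ] at this
  congr 2 <;> omega

end Nullity

section Twins

variable {R ι κ κ' : Type*}

/-- The graph `X` with the vertices `κ` adjoined, all with neighbourhood `c` in `ι`. -/
def adjoinTwins (X : Matrix ι ι R) (c : ι → R) (D : Matrix κ κ R) : Matrix (ι ⊕ κ) (ι ⊕ κ) R :=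
  fromBlocks X (replicateCol κ c) (replicateRow κ c) D

def pairBlock (a e b : R) : Matrix Bool Bool R :=
  of fun i j => if i = j then (if i then a else b) else e

theorem adjoinTwins_submatrix (X : Matrix ι ι R) (c : ι → R) (D : Matrix κ κ R) (e : κ' ≃ κ) :
    adjoinTwins X c (D.submatrix e e)
      = (adjoinTwins X c D).submatrix (Equiv.sumCongr (Equiv.refl ι) e)
          (Equiv.sumCongr (Equiv.refl ι) e) := by
  ext (i | i) (j | j) <;> rfl

theorem adjoinTwins_add_fromBlocks [AddZeroClass R] (X X' : Matrix ι ι R) (c : ι → R)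
    (D D' : Matrix κ κ R) :
    adjoinTwins X c D + fromBlocks X' 0 0 D' = adjoinTwins (X + X') c (D + D') := by
  ext (i | i) (j | j) <;> simp [adjoinTwins]

theorem card_adjoinTwins_diag_eq [Fintype ι] [Fintype κ] [DecidableEq R] (X : Matrix ι ι R)
    (c : ι → R) (D : Matrix κ κ R) (r : R) :
    Fintype.card {i // adjoinTwins X c D i i = r}
      = Fintype.card {i // X i i = r} + Fintype.card {j // D j j = r} := by
  rw [Fintype.card_congr (Equiv.subtypeSum), Fintype.card_sum]
  rfl

theorem pairBlock_submatrix_boolNot (a e b : R) :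
    (pairBlock a e b).submatrix Equiv.boolNot Equiv.boolNot = pairBlock b e a := by
  ext (_ | _) (_ | _) <;> rfl

theorem pairBlock_add_diagonal [AddZeroClass R] (a e b : R) (h : Bool → R) :
    pairBlock a e b + diagonal h = pairBlock (a + h true) e (b + h false) := by
  ext (_ | _) (_ | _) <;> simp [pairBlock]

theorem replicateCol_mul_mul_replicateRow [CommRing R] [Fintype κ] (M : Matrix κ κ R)
    (c : ι → R) :
    replicateCol κ c * M * replicateRow κ c = (∑ i, ∑ j, M i j) • vecMulVec c c := by
  ext x y
  simp only [mul_apply, replicateCol_apply, replicateRow_apply, Matrix.smul_apply,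
    vecMulVec_apply, Finset.sum_mul, smul_eq_mul]
  rw [Finset.sum_comm]
  exact Finset.sum_congr rfl fun _ _ => Finset.sum_congr rfl fun _ _ => by ring

variable {K : Type*} [Field K] [Fintype ι]

theorem nullity_adjoinTwins_submatrix [Fintype κ] [Fintype κ'] (X : Matrix ι ι K) (c : ι → K)
    (D : Matrix κ κ K) (e : κ' ≃ κ) :
    (adjoinTwins X c (D.submatrix e e)).nullity = (adjoinTwins X c D).nullity := by
  rw [adjoinTwins_submatrix, nullity_submatrix]

theorem nullity_adjoinTwins_of_invertible [DecidableEq ι] [Fintype κ] [DecidableEq κ]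
    (X : Matrix ι ι K) (c : ι → K) (D : Matrix κ κ K) [Invertible D] :
    (adjoinTwins X c D).nullity = (X - (∑ i, ∑ j, (⅟D) i j) • vecMulVec c c).nullity := by
  rw [adjoinTwins, nullity_fromBlocks_of_invertible₂₂, replicateCol_mul_mul_replicateRow]

/-- Passing to the basis `v - w, v` of the twins `v = true`, `w = false` splits off the
`1 × 1` block `b - e`. -/
theorem nullity_adjoinTwins_pairBlock_left [DecidableEq ι] (X : Matrix ι ι K) (c : ι → K)
    (e b : K) :
    (adjoinTwins X c (pairBlock e e b)).nullity
      = (adjoinTwins X c (of fun _ _ => e : Matrix Unit Unit K)).nullity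
        + (of fun _ _ => b - e : Matrix Unit Unit K).nullity := by
  let F : Matrix Bool Bool K :=
    of fun i j => if i then (if j then 1 else -1) else (if j then 1 else 0)
  let σ : ι ⊕ Bool ≃ (ι ⊕ Unit) ⊕ Unit :=
    (Equiv.sumCongr (Equiv.refl ι) Equiv.boolEquivPUnitSumPUnit).trans
      (Equiv.sumAssoc ι Unit Unit).symm
  have hF : IsUnit F.det := by
    refine isUnit_det_of_right_inverse
      (B := of fun i j => if i then (if j then 0 else 1) else (if j then -1 else 1)) ?_
    ext (_ | _) (_ | _) <;> simp [F, mul_apply]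
  have hP : IsUnit (fromBlocks 1 0 0 F : Matrix (ι ⊕ Bool) (ι ⊕ Bool) K).det := by
    simpa [det_fromBlocks_zero₂₁] using hF
  have hcongr : fromBlocks 1 0 0 F * adjoinTwins X c (pairBlock e e b) * (fromBlocks 1 0 0 F)ᵀ
      = (fromBlocks (adjoinTwins X c (of fun _ _ => e)) 0 0 (of fun _ _ => b - e)).submatrix
          σ σ := by
    simp only [adjoinTwins, fromBlocks_transpose, fromBlocks_multiply, transpose_one,
      transpose_zero]
    ext (i | i) (j | j)
    · simp [σ]
    · cases j <;> simp [σ, F, pairBlock, mul_apply, Equiv.boolEquivPUnitSumPUnit]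
    · cases i <;> simp [σ, F, pairBlock, mul_apply, Equiv.boolEquivPUnitSumPUnit]
    · cases i <;> cases j <;>
        simp [σ, F, pairBlock, mul_apply, Equiv.boolEquivPUnitSumPUnit, ← sub_eq_add_neg]
  rw [← nullity_mul_mul_of_isUnit_det _ _ _ hP (by rwa [det_transpose]), hcongr,
    nullity_submatrix, nullity_fromBlocks_zero₁₂_zero₂₁]

theorem nullity_adjoinTwins_pairBlock_self [DecidableEq ι] (X : Matrix ι ι K) (c : ι → K)
    (e : K) :
    (adjoinTwins X c (pairBlock e e e)).nullity
      = (adjoinTwins X c (of fun _ _ => e : Matrix Unit Unit K)).nullity + 1 := by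
  classical
  rw [nullity_adjoinTwins_pairBlock_left, sub_self, nullity_unique, if_pos rfl]

end Twins

section GF2

variable {ι : Type*} [Fintype ι] [DecidableEq ι] (X : Matrix ι ι (ZMod 2)) (c : ι → ZMod 2)

theorem nullity_adjoinTwins_pairBlock_of_add_eq_one {a e b : ZMod 2} (h : a + b = 1) :
    (adjoinTwins X c (pairBlock a e b)).nullity
      = (adjoinTwins X c (of fun _ _ => e : Matrix Unit Unit (ZMod 2))).nullity := by
  obtain ⟨rfl, hb⟩ | ⟨rfl, ha⟩ : a = e ∧ b - a = 1 ∨ b = e ∧ a - b = 1 := by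
    revert a e b; decide
  · rw [nullity_adjoinTwins_pairBlock_left, hb, nullity_unique, if_neg one_ne_zero, add_zero]
  · rw [← pairBlock_submatrix_boolNot, nullity_adjoinTwins_submatrix,
      nullity_adjoinTwins_pairBlock_left, ha, nullity_unique, if_neg one_ne_zero, add_zero]

theorem nullity_adjoinTwins_pairBlock_of_ne {a e : ZMod 2} (h : a ≠ e) :
    (adjoinTwins X c (pairBlock a e a)).nullity = X.nullity := by
  have hinv : pairBlock a e a * pairBlock a e a = 1 := by
    revert a e; decide
  have hsum : ∑ i, ∑ j, pairBlock a e a i j = 0 := by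
    revert a e; decide
  let := invertibleOfRightInverse _ _ hinv
  rw [nullity_adjoinTwins_of_invertible, invOf_eq_right_inv hinv, hsum, zero_smul, sub_zero]

end GF2

end Matrix

section Bracket

variable {ι κ : Type*} [Fintype ι] [DecidableEq ι] {K : Type*} [CommRing K]

theorem gBracket_eq_sum_nullity (M : Matrix ι ι (ZMod 2)) (A B d : K) :
    gBracket M A B d = ∑ f : ι → ZMod 2,
      A ^ (diagonal f).nullity * B ^ (diagonal f).rank * d ^ (M + diagonal f).nullity :=
  rfl

theorem gBracket_adjoinTwins [Fintype κ] [DecidableEq κ] (M : Matrix ι ι (ZMod 2))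
    (c : ι → ZMod 2) (D : Matrix κ κ (ZMod 2)) (A B d : K) :
    gBracket (adjoinTwins M c D) A B d = ∑ g : ι → ZMod 2,
      A ^ (diagonal g).nullity * B ^ (diagonal g).rank * ∑ h : κ → ZMod 2,
        A ^ (diagonal h).nullity * B ^ (diagonal h).rank
          * d ^ (adjoinTwins (M + diagonal g) c (D + diagonal h)).nullity := by
  rw [gBracket_eq_sum_nullity, ← (Equiv.sumArrowEquivProdArrow ι κ (ZMod 2)).symm.sum_comp,
    Fintype.sum_prod_type]
  refine Finset.sum_congr rfl fun g _ => ?_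
  rw [Finset.mul_sum]
  refine Finset.sum_congr rfl fun h _ => ?_
  simp only [Equiv.sumArrowEquivProdArrow, Equiv.coe_fn_symm_mk]
  rw [← fromBlocks_diagonal, adjoinTwins_add_fromBlocks, nullity_fromBlocks_zero₁₂_zero₂₁,
    rank_fromBlocks_zero₁₂_zero₂₁]
  ring

theorem sum_adjoinTwins_pairBlock_add_diagonal (N : Matrix ι ι (ZMod 2)) (c : ι → ZMod 2)
    (e : ZMod 2) {A B d : K} (hAB : A * B = 1) (hd : d = -A ^ 2 - B ^ 2) :
    ∑ h : Bool → ZMod 2, A ^ (diagonal h).nullity * B ^ (diagonal h).rank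
        * d ^ (adjoinTwins N c (pairBlock 1 e 0 + diagonal h)).nullity = d ^ N.nullity := by
  have h2 : (1 + 1 : ZMod 2) = 0 := rfl
  rw [← (Equiv.boolArrowEquivProd (ZMod 2)).symm.sum_comp, Fintype.sum_prod_type]
  simp only [ZMod.sum_univ_two, pow_nullity_mul_pow_rank_diagonal, pairBlock_add_diagonal,
    Fintype.prod_bool, Equiv.boolArrowEquivProd_symm_apply, Bool.false_eq_true, ↓reduceIte,
    one_ne_zero, add_zero, zero_add, h2]
  obtain rfl | rfl : e = 0 ∨ e = 1 := by revert e; decide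
  all_goals
    simp (disch := decide) only [nullity_adjoinTwins_pairBlock_of_add_eq_one,
      nullity_adjoinTwins_pairBlock_of_ne, nullity_adjoinTwins_pairBlock_self]
  · set m := (adjoinTwins N c (of fun _ _ => 0 : Matrix Unit Unit (ZMod 2))).nullity
    linear_combination (d ^ (m + 1) + d ^ N.nullity) * hAB + d ^ m * hd
  · set m := (adjoinTwins N c (of fun _ _ => 1 : Matrix Unit Unit (ZMod 2))).nullity
    linear_combination (d ^ (m + 1) + d ^ N.nullity) * hAB + d ^ m * hd

theorem gBracket_adjoinTwins_pairBlock (M : Matrix ι ι (ZMod 2)) (c : ι → ZMod 2) (e : ZMod 2)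
    {A B d : K} (hAB : A * B = 1) (hd : d = -A ^ 2 - B ^ 2) :
    gBracket (adjoinTwins M c (pairBlock 1 e 0)) A B d = gBracket M A B d := by
  rw [gBracket_adjoinTwins, gBracket_eq_sum_nullity]
  exact Finset.sum_congr rfl fun g _ => by
    rw [sum_adjoinTwins_pairBlock_add_diagonal _ _ _ hAB hd]

theorem gBracketR_adjoinTwins_pairBlock (M : Matrix ι ι (ZMod 2)) (c : ι → ZMod 2) (e : ZMod 2)
    {A : ℝ} (hA : A ≠ 0) :
    gBracketR (adjoinTwins M c (pairBlock 1 e 0)) A = gBracketR M A :=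
  gBracket_adjoinTwins_pairBlock M c e (mul_inv_cancel₀ hA) rfl

theorem jonesV_adjoinTwins_pairBlock (M : Matrix ι ι (ZMod 2)) (c : ι → ZMod 2) (e : ZMod 2)
    {t : ℝ} (ht : 0 < t) :
    jonesV (adjoinTwins M c (pairBlock 1 e 0)) t = jonesV M t := by
  have hloop : Fintype.card {j // pairBlock (1 : ZMod 2) e 0 j j = 1} = 1 := by
    revert e; decide
  have hexp : ∀ n l : ℕ, (3 * ((n + 2 : ℕ) : ℝ) - 6 * ((l + 1 : ℕ) : ℝ)) / 4
      = (3 * (n : ℝ) - 6 * (l : ℝ)) / 4 := fun n l => by push_cast; ring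
  rw [jonesV, jonesV, gBracketR_adjoinTwins_pairBlock _ _ _ (Real.rpow_pos_of_pos ht _).ne',
    card_adjoinTwins_diag_eq, hloop, Fintype.card_sum, Fintype.card_bool, hexp, pow_add,
    neg_one_sq, mul_one]

end Bracket

theorem reducedBracket_omega2_general {W : Type*} [Fintype W] [DecidableEq W]
    (MH : Matrix W W (ZMod 2))
    (MG : Matrix (W ⊕ Bool) (W ⊕ Bool) (ZMod 2)) (hsymG : MG.IsSymm)
    (hrestrict : ∀ x y : W, MG (Sum.inl x) (Sum.inl y) = MH x y)
    (hv : MG (Sum.inr true) (Sum.inr true) = 1)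
    (hw : MG (Sum.inr false) (Sum.inr false) = 0)
    (hnbr : ∀ x : W, MG (Sum.inl x) (Sum.inr true) = MG (Sum.inl x) (Sum.inr false)) :
    (∀ A : ℝ, A ≠ 0 → gBracketR MG A = gBracketR MH A) ∧
    (∀ t : ℝ, 0 < t → jonesV MG t = jonesV MH t) := by
  have hMG : MG = adjoinTwins MH (fun x => MG (Sum.inl x) (Sum.inr false))
      (pairBlock 1 (MG (Sum.inr true) (Sum.inr false)) 0) := by
    ext (x | (_ | _)) (y | (_ | _)) <;>
      simp [adjoinTwins, pairBlock, hrestrict, hnbr, hv, hw, hsymG.apply]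
  rw [hMG]
  exact ⟨fun A hA => gBracketR_adjoinTwins_pairBlock _ _ _ hA,
    fun t ht => jonesV_adjoinTwins_pairBlock _ _ _ ht⟩

/-- Proposition 6: the reduced graph bracket (hence the graph Jones polynomial)
is invariant under `Ω.2` moves.  Here `G` (with matrix `MG`, on the vertices of
`H` together with two new vertices `v = Sum.inr true` and `w = Sum.inr false`)
is obtained from `H` (with matrix `MH`) by adjoining a looped vertex `v` and an
unlooped vertex `w` such that every old vertex adjacent to one of `v, w` is
adjacent to the other; `v` and `w` may or may not be adjacent. -/
theorem reducedBracket_omega2 {W : Type*} [Fintype W] [DecidableEq W]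
    (MH : Matrix W W (ZMod 2)) (hsymH : MH.IsSymm)
    (MG : Matrix (W ⊕ Bool) (W ⊕ Bool) (ZMod 2)) (hsymG : MG.IsSymm)
    (hrestrict : ∀ x y : W, MG (Sum.inl x) (Sum.inl y) = MH x y)
    (hv : MG (Sum.inr true) (Sum.inr true) = 1)
    (hw : MG (Sum.inr false) (Sum.inr false) = 0)
    (hnbr : ∀ x : W, MG (Sum.inl x) (Sum.inr true) = MG (Sum.inl x) (Sum.inr false)) :
    (∀ A : ℝ, A ≠ 0 → gBracketR MG A = gBracketR MH A) ∧
    (∀ t : ℝ, 0 < t → jonesV MG t = jonesV MH t) :=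
  reducedBracket_omega2_general MH MG hsymG hrestrict hv hw hnbr
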